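/- Let V ⊂ ℂ be open, let φ and ψ be analytic on V, let μ > 0 and k > 1 be real, and set κ := 2μ/(k − 1). Define real functions u₁, u₂ on V (viewed as a subset of ℝ²) by u₁(z) + i·u₂(z) = (1/(2μ))( k·φ(z) − z·conj(φ′(z)) − conj(ψ(z)) ). Then u = (u₁, u₂) solves the Lamé system with shear modulus μ and bulk modulus κ: for j = 1, 2, μ·Δu_j + κ·∂_j(∂₁u₁ + ∂₂u₂) = 0 on V. -/

import Mathlib

open Complex ComplexConjugate Set

/-- The partial derivative of a real-valued function on `ℂ ≅ ℝ²` in the direction `v`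
(so `pd 1 f = ∂f/∂x₁` and `pd Complex.I f = ∂f/∂x₂`). -/
noncomputable def pd (v : ℂ) (f : ℂ → ℝ) : ℂ → ℝ :=
  fun z => fderiv ℝ f z v

/-!
Write the displacement as `u₁ + i u₂ = F` with `F = f + z·conj g + conj h` and `f, g, h`
holomorphic. Such fields are closed under directional derivatives: `∂_v` replaces `(f, g, h)`
by `(f' v, g' v, conj v · g + h' v)`, and `Im F = Re (-i F)` is again of this form. Iterating
gives `Δ (Re F) = Re (4 g')`, `Δ (Im F) = Re (4 i g')` and `div u = 2 Re (f' + g)`, so the Lamé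
operator `μ Δu + κ ∇(div u)` is the conjugate of `4 μ g' + 2 κ (f'' + g')`. For
`2μ F = k φ − z conj φ' − conj ψ` this is `φ'' (2κ(k − 1) − 4μ) / (2μ) = 0`.
-/

noncomputable def kmField (f g h : ℂ → ℂ) (w : ℂ) : ℂ :=
  f w + w * conj (g w) + conj (h w)

lemma kmField_im (f g h : ℂ → ℂ) (w : ℂ) :
    (kmField f g h w).im =
      (kmField (fun w => -I * f w) (fun w => I * g w) (fun w => I * h w) w).re := by
  have : kmField (fun w => -I * f w) (fun w => I * g w) (fun w => I * h w) w
      = -I * kmField f g h w := by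
    simp only [kmField, map_mul, conj_I]
    ring
  rw [this]
  simp

lemma pd_congr_of_eqOn {V : Set ℂ} (hV : IsOpen V) {u₁ u₂ : ℂ → ℝ} (h : EqOn u₁ u₂ V)
    {z : ℂ} (hz : z ∈ V) (v : ℂ) : pd v u₁ z = pd v u₂ z := by
  simp only [pd, (h.eventuallyEq_of_mem (hV.mem_nhds hz)).fderiv_eq]

lemma pd_re_kmField {f g h : ℂ → ℂ} {f' g' h' z : ℂ} (hf : HasDerivAt f f' z)
    (hg : HasDerivAt g g' z) (hh : HasDerivAt h h' z) (v : ℂ) :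
    pd v (fun w => (kmField f g h w).re) z
      = (f' * v + z * conj (g' * v) + conj (conj v * g z + h' * v)).re := by
  have hconj {F : ℂ → ℂ} {F' : ℂ} (hF : HasDerivAt F F' z) :=
    conjCLE.toContinuousLinearMap.hasFDerivAt.comp z (hF.hasFDerivAt.restrictScalars ℝ)
  have hfield := ((hf.hasFDerivAt.restrictScalars ℝ).add
    ((hasFDerivAt_id z).mul' (hconj hg))).add (hconj hh)
  have hre : HasFDerivAt (fun w => (kmField f g h w).re) _ z := reCLM.hasFDerivAt.comp z hfield
  rw [pd, hre.fderiv]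
  simp only [ContinuousLinearMap.comp_apply, add_apply, smul_apply, reCLM_apply,
    ContinuousLinearMap.coe_restrictScalars', ContinuousLinearMap.toSpanSingleton_apply,
    ContinuousLinearMap.id_apply, ContinuousLinearEquiv.coe_coe, conjCLE_apply, id_eq,
    Function.comp_apply, smul_eq_mul, op_smul_eq_smul]
  congr 1
  simp only [map_add, map_mul, conj_conj]
  ring

section Holomorphic

variable {V : Set ℂ} (hV : IsOpen V) {f g h : ℂ → ℂ} (hf : DifferentiableOn ℂ f V)
  (hg : DifferentiableOn ℂ g V) (hh : DifferentiableOn ℂ h V)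
include hV hf hg hh

lemma eqOn_pd_re_kmField {u : ℂ → ℝ} (hu : EqOn u (fun w => (kmField f g h w).re) V) (v : ℂ) :
    EqOn (pd v u) (fun w => (kmField (fun w => deriv f w * v) (fun w => deriv g w * v)
      (fun w => conj v * g w + deriv h w * v) w).re) V := by
  intro w hw
  have hasDerivAt {F : ℂ → ℂ} (hF : DifferentiableOn ℂ F V) : HasDerivAt F (deriv F w) w :=
    (hF.differentiableAt (hV.mem_nhds hw)).hasDerivAt
  rw [pd_congr_of_eqOn hV hu hw, pd_re_kmField (hasDerivAt hf) (hasDerivAt hg) (hasDerivAt hh)]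
  rfl

lemma eqOn_pd_pd_re_kmField {u : ℂ → ℝ} (hu : EqOn u (fun w => (kmField f g h w).re) V)
    (a b : ℂ) :
    EqOn (pd a (pd b u)) (fun w => (kmField (fun w => deriv (deriv f) w * (a * b))
      (fun w => deriv (deriv g) w * (a * b))
      (fun w => (conj a * b + a * conj b) * deriv g w + deriv (deriv h) w * (a * b)) w).re) V := by
  have hf' := hf.deriv hV
  have hg' := hg.deriv hV
  have hh' := hh.deriv hV
  intro w hw
  rw [eqOn_pd_re_kmField hV (hf'.mul_const b) (hg'.mul_const b)
    ((hg.const_mul (conj b)).add (hh'.mul_const b)) (eqOn_pd_re_kmField hV hf hg hh hu b) a hw]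
  have hw' := hV.mem_nhds hw
  simp only [kmField, deriv_mul_const_field', deriv_add ((hg.const_mul _).differentiableAt hw')
    ((hh'.mul_const b).differentiableAt hw'), deriv_const_mul_field', map_add, map_mul,
    conj_conj]
  congr 1
  ring

lemma laplacian_re_kmField {u : ℂ → ℝ} (hu : EqOn u (fun w => (kmField f g h w).re) V)
    {z : ℂ} (hz : z ∈ V) :
    pd 1 (pd 1 u) z + pd I (pd I u) z = (4 * deriv g z).re := by
  rw [eqOn_pd_pd_re_kmField hV hf hg hh hu 1 1 hz, eqOn_pd_pd_re_kmField hV hf hg hh hu I I hz,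
    ← add_re]
  trans (conj (4 * deriv g z)).re
  · congr 1
    simp only [kmField, map_add, map_mul, map_neg, map_one, map_ofNat, conj_I]
    linear_combination (deriv (deriv f) z + z * conj (deriv (deriv g) z)
      + conj (deriv (deriv h) z) - 2 * conj (deriv g z)) * I_sq
  · exact conj_re _

lemma eqOn_div_kmField {u₁ u₂ : ℂ → ℝ} (hu₁ : EqOn u₁ (fun w => (kmField f g h w).re) V)
    (hu₂ : EqOn u₂ (fun w => (kmField (fun w => -I * f w) (fun w => I * g w)
      (fun w => I * h w) w).re) V) :
    EqOn (fun w => pd 1 u₁ w + pd I u₂ w)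
      (fun w => (kmField (fun w => 2 * deriv f w) 0 (fun w => 2 * g w) w).re) V := by
  intro w hw
  simp only [eqOn_pd_re_kmField hV hf hg hh hu₁ 1 hw, eqOn_pd_re_kmField hV (hf.const_mul (-I))
    (hg.const_mul I) (hh.const_mul I) hu₂ I hw, ← add_re]
  congr 1
  simp only [kmField, deriv_const_mul_field', map_add, map_mul, map_neg, map_one, map_zero, conj_I,
    map_ofNat, Pi.zero_apply]
  linear_combination (w * conj (deriv g w) + conj (deriv h w) - deriv f w - conj (g w)) * I_sq

lemma pd_div_kmField {u₁ u₂ : ℂ → ℝ} (hu₁ : EqOn u₁ (fun w => (kmField f g h w).re) V)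
    (hu₂ : EqOn u₂ (fun w => (kmField (fun w => -I * f w) (fun w => I * g w)
      (fun w => I * h w) w).re) V) (a : ℂ) {z : ℂ} (hz : z ∈ V) :
    pd a (fun w => pd 1 u₁ w + pd I u₂ w) z = (2 * a * (deriv (deriv f) z + deriv g z)).re := by
  rw [eqOn_pd_re_kmField hV ((hf.deriv hV).const_mul 2) (differentiableOn_const 0)
    (hg.const_mul 2) (eqOn_div_kmField hV hf hg hh hu₁ hu₂) a hz]
  simp only [kmField, deriv_const_mul_field', deriv_const', zero_mul, mul_zero,
    map_zero, zero_add, add_zero, add_re, conj_re]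
  rw [← add_re]
  congr 1
  ring

lemma lame_kmField {u₁ u₂ : ℂ → ℝ} (hu : ∀ z ∈ V, (u₁ z : ℂ) + I * u₂ z = kmField f g h z)
    (μ κ : ℝ) {z : ℂ} (hz : z ∈ V) :
    μ * (pd 1 (pd 1 u₁) z + pd I (pd I u₁) z) + κ * pd 1 (fun w => pd 1 u₁ w + pd I u₂ w) z
        = (4 * μ * deriv g z + 2 * κ * (deriv (deriv f) z + deriv g z)).re ∧
      μ * (pd 1 (pd 1 u₂) z + pd I (pd I u₂) z) + κ * pd I (fun w => pd 1 u₁ w + pd I u₂ w) z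
        = (I * (4 * μ * deriv g z + 2 * κ * (deriv (deriv f) z + deriv g z))).re := by
  have hu₁ : EqOn u₁ (fun w => (kmField f g h w).re) V := fun w hw => by
    simpa using congrArg re (hu w hw)
  have hu₂ : EqOn u₂ (fun w => (kmField (fun w => -I * f w) (fun w => I * g w)
      (fun w => I * h w) w).re) V := fun w hw =>
    (show u₂ w = (kmField f g h w).im by simpa using congrArg im (hu w hw)).trans
      (kmField_im f g h w)
  rw [laplacian_re_kmField hV hf hg hh hu₁ hz, laplacian_re_kmField hV (hf.const_mul (-I))
    (hg.const_mul I) (hh.const_mul I) hu₂ hz, pd_div_kmField hV hf hg hh hu₁ hu₂ 1 hz,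
    pd_div_kmField hV hf hg hh hu₁ hu₂ I hz, deriv_const_mul_field']
  simp only [← re_ofReal_mul, ← add_re]
  constructor <;> congr 1 <;> ring

end Holomorphic

theorem kolosov_muskhelishvili_solves_lame_general
    (V : Set ℂ) (hV : IsOpen V)
    (φ ψ : ℂ → ℂ) (hφ : DifferentiableOn ℂ φ V) (hψ : DifferentiableOn ℂ ψ V)
    (μ k : ℝ) (hk : 1 < k)
    (κ : ℝ) (hκ : κ = 2 * μ / (k - 1))
    (u₁ u₂ : ℂ → ℝ)
    (hu : ∀ z ∈ V, (u₁ z : ℂ) + Complex.I * (u₂ z : ℂ) =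
      (1 / (2 * (μ : ℂ))) * ((k : ℂ) * φ z - z * conj (deriv φ z) - conj (ψ z))) :
    ∀ z ∈ V,
      μ * (pd 1 (pd 1 u₁) z + pd Complex.I (pd Complex.I u₁) z)
        + κ * pd 1 (fun w => pd 1 u₁ w + pd Complex.I u₂ w) z = 0 ∧
      μ * (pd 1 (pd 1 u₂) z + pd Complex.I (pd Complex.I u₂) z)
        + κ * pd Complex.I (fun w => pd 1 u₁ w + pd Complex.I u₂ w) z = 0 := by
  intro z hz
  set c : ℂ := 1 / (2 * (μ : ℂ))
  have hc : conj c = c := by simp [c, map_ofNat]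
  have hU : ∀ w ∈ V, (u₁ w : ℂ) + I * u₂ w =
      kmField (fun w => c * k * φ w) (fun w => -c * deriv φ w) (fun w => -c * ψ w) w := by
    intro w hw
    rw [hu w hw]
    simp only [kmField, map_mul, map_neg, hc]
    ring
  have hbracket : 4 * μ * deriv (fun w => -c * deriv φ w) z + 2 * κ *
      (deriv (deriv fun w => c * k * φ w) z + deriv (fun w => -c * deriv φ w) z) = 0 := by
    have hk' : (k : ℂ) - 1 ≠ 0 := by exact_mod_cast (sub_pos.mpr hk).ne'
    simp only [deriv_const_mul_field', hκ]
    push_cast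
    field_simp
    ring
  obtain ⟨h₁, h₂⟩ := lame_kmField hV (hφ.const_mul _) ((hφ.deriv hV).const_mul _)
    (hψ.const_mul _) hU μ κ hz
  simp only [hbracket, mul_zero, zero_re] at h₁ h₂
  exact ⟨h₁, h₂⟩

/-- **Kolosov–Muskhelishvili representation (converse direction).** If `φ, ψ` are analytic
on an open set `V ⊆ ℂ`, `μ > 0`, `k > 1` and `κ = 2μ/(k-1)`, then the displacement
`u = (u₁, u₂)` with `u₁ + i u₂ = (1/(2μ))(k φ(z) - z conj(φ'(z)) - conj(ψ(z)))` solves the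
two-dimensional isotropic Lamé system `μ Δu + κ ∇(div u) = 0` on `V`. -/
theorem kolosov_muskhelishvili_solves_lame
    (V : Set ℂ) (hV : IsOpen V)
    (φ ψ : ℂ → ℂ) (hφ : DifferentiableOn ℂ φ V) (hψ : DifferentiableOn ℂ ψ V)
    (μ k : ℝ) (hμ : 0 < μ) (hk : 1 < k)
    (κ : ℝ) (hκ : κ = 2 * μ / (k - 1))
    (u₁ u₂ : ℂ → ℝ)
    (hu : ∀ z ∈ V, (u₁ z : ℂ) + Complex.I * (u₂ z : ℂ) =
      (1 / (2 * (μ : ℂ))) * ((k : ℂ) * φ z - z * conj (deriv φ z) - conj (ψ z))) :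
    ∀ z ∈ V,
      μ * (pd 1 (pd 1 u₁) z + pd Complex.I (pd Complex.I u₁) z)
        + κ * pd 1 (fun w => pd 1 u₁ w + pd Complex.I u₂ w) z = 0 ∧
      μ * (pd 1 (pd 1 u₂) z + pd Complex.I (pd Complex.I u₂) z)
        + κ * pd Complex.I (fun w => pd 1 u₁ w + pd Complex.I u₂ w) z = 0 :=
  kolosov_muskhelishvili_solves_lame_general V hV φ ψ hφ hψ μ k hk κ hκ u₁ u₂ hu
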